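/- Let E ⊆ ℝ^ℓ be a convex set contained in an affine hyperplane {v : u·v = 1} for some linear functional u on ℝ^ℓ, and let ē ∈ ℝ^ℓ. Let e : Fin n → ℝ^ℓ be a linearly independent family such that every e y is an extreme point of E, and let p : Fin n → ℝ satisfy p y > 0 for all y and ∑_y p y • e y = ē. Then f : Fin n → ℝ^ℓ defined by f y = p y • e y is an extreme point of M_n(E,ē). -/

import Mathlib

open Matrix Finset

/-- The set of `n`-outcome measurements with normalized effects in `E` and unit
effect `ebar`. -/
def Measurements {ℓ : ℕ} (n : ℕ) (E : Set (Fin ℓ → ℝ)) (ebar : Fin ℓ → ℝ) :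
    Set (Fin n → Fin ℓ → ℝ) :=
  {f | (∀ y, ∃ t : ℝ, 0 ≤ t ∧ ∃ c ∈ E, f y = t • c) ∧ ∑ y, f y = ebar}

/-! Since `E` lies in the hyperplane `u = 1`, the cone over `E` has `E` as a base, and the ray
through an extreme point of the base is an extreme ray of the cone. Writing the effects of two
measurements `g`, `h` with `a • g + b • h = f` as cone elements, each `g y` therefore lies on the
ray through `e y`, say `g y = s y • e y`; comparing `∑ y, g y = ebar = ∑ y, p y • e y` and using
linear independence gives `s = p`, i.e. `g = f`. -/

theorem smul_eq_smul_of_add_eq_smul_of_mem_extremePoints {V : Type*} [AddCommGroup V]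
    [Module ℝ V] {E : Set V} {u : V →ₗ[ℝ] ℝ} (hu : ∀ v ∈ E, u v = 1) {x c d : V}
    (hx : x ∈ E.extremePoints ℝ) (hc : c ∈ E) (hd : d ∈ E) {s r t : ℝ} (hs : 0 ≤ s)
    (hr : 0 ≤ r) (h : s • c + r • d = t • x) :
    s • c = s • x := by
  have hsum : s + r = t := by simpa [hu c hc, hu d hd, hu x hx.1] using congrArg u h
  rcases hs.eq_or_lt with rfl | hs
  · simp
  rcases hr.eq_or_lt with rfl | hr
  · simpa [← hsum] using h
  have hseg : x ∈ openSegment ℝ c d := by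
    refine mem_openSegment_iff_div.2 ⟨s, r, hs, hr, ?_⟩
    rw [hsum, div_eq_inv_mul, div_eq_inv_mul, mul_smul, mul_smul, ← smul_add, h, smul_smul,
      inv_mul_cancel₀ (by linarith), one_smul]
  rw [hx.2 hc hd hseg]

theorem extremal_measurement_of_linearIndependent_general
    {ℓ n : ℕ} (E : Set (Fin ℓ → ℝ))
    (u : (Fin ℓ → ℝ) →ₗ[ℝ] ℝ) (hu : ∀ v ∈ E, u v = 1)
    (ebar : Fin ℓ → ℝ) (e : Fin n → Fin ℓ → ℝ)
    (hind : LinearIndependent ℝ e)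
    (he : ∀ y, e y ∈ Set.extremePoints ℝ E)
    (p : Fin n → ℝ) (hp : ∀ y, 0 < p y)
    (hsum : ∑ y, p y • e y = ebar)
    (f : Fin n → Fin ℓ → ℝ) (hf : ∀ y, f y = p y • e y) :
    f ∈ Set.extremePoints ℝ (Measurements n E ebar) := by
  refine ⟨⟨fun y => ⟨p y, (hp y).le, e y, (he y).1, hf y⟩, by simpa only [← hf] using hsum⟩, ?_⟩
  rintro g ⟨hgE, hgsum⟩ h ⟨hhE, -⟩ ⟨a, b, ha, hb, -, habf⟩
  have hray : ∀ y, ∃ s : ℝ, g y = s • e y := by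
    intro y
    obtain ⟨s, hs, c, hc, hgy⟩ := hgE y
    obtain ⟨r, hr, d, hd, hhy⟩ := hhE y
    have hsplit : (a * s) • c + (b * r) • d = p y • e y := by
      rw [← hf, ← habf, Pi.add_apply, Pi.smul_apply, Pi.smul_apply, hgy, hhy, smul_smul,
        smul_smul]
    have hcone := smul_eq_smul_of_add_eq_smul_of_mem_extremePoints hu (he y) hc hd
      (by positivity) (by positivity) hsplit
    rw [mul_smul, mul_smul, smul_right_inj ha.ne'] at hcone
    exact ⟨s, hgy.trans hcone⟩
  choose s hs using hray
  have hsp : ∀ y, s y = p y :=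
    Fintype.linearIndependent_iffₛ.1 hind s p (by simp only [← hs, hgsum, hsum])
  funext y
  rw [hs, hsp, hf]

/-- a measurement whose effects are positive multiples of a
linearly independent family of extreme points of `E` is an extreme point of
the set of measurements. -/
theorem extremal_measurement_of_linearIndependent
    {ℓ n : ℕ} (E : Set (Fin ℓ → ℝ)) (hE : Convex ℝ E)
    (u : (Fin ℓ → ℝ) →ₗ[ℝ] ℝ) (hu : ∀ v ∈ E, u v = 1)
    (ebar : Fin ℓ → ℝ) (e : Fin n → Fin ℓ → ℝ)
    (hind : LinearIndependent ℝ e)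
    (he : ∀ y, e y ∈ Set.extremePoints ℝ E)
    (p : Fin n → ℝ) (hp : ∀ y, 0 < p y)
    (hsum : ∑ y, p y • e y = ebar)
    (f : Fin n → Fin ℓ → ℝ) (hf : ∀ y, f y = p y • e y) :
    f ∈ Set.extremePoints ℝ (Measurements n E ebar) :=
  extremal_measurement_of_linearIndependent_general E u hu ebar e hind he p hp hsum f hf
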